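/- Let d be a nonnegative integer and q > 0. If f(x) = Σ_{j=0}^d a_j (1-x)^j (x+1)^{d-j} with all a_j ≥ 0, then sup_{x ∈ [-1,1]} f(x) ≤ ((qd+1)/2)^{1/q} (∫_{-1}^1 f(x)^q dx)^{1/q}. -/

import Mathlib

open Finset MeasureTheory

/-!
Write `f = Σ A_j (1-x)^j (x+1)^(d-j)`. Since `f(x) / (x+1)^d = Σ A_j ((1-x)/(x+1))^j` is
nonincreasing, `f(x) ≥ f(x₀) ((x+1)/(x₀+1))^d` for `-1 ≤ x ≤ x₀`, so integrating the `q`-th power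
gives `∫_{-1}^{x₀} f^q ≥ f(x₀)^q (x₀+1)/(qd+1)`. The reflection `x ↦ -x` preserves the class and
gives `∫_{x₀}^1 f^q ≥ f(x₀)^q (1-x₀)/(qd+1)`; adding the two bounds yields
`f(x₀)^q ≤ (qd+1)/2 ∫_{-1}^1 f^q` at every point `x₀` of `[-1, 1]`.
-/

noncomputable def lorentzPoly (d : ℕ) (A : ℕ → ℝ) (x : ℝ) : ℝ :=
  ∑ j ∈ range (d + 1), A j * (1 - x) ^ j * (x + 1) ^ (d - j)

theorem div_le_integral_of_mul_rpow_le {a b r K : ℝ} {G : ℝ → ℝ} (hab : a ≤ b) (hr : 0 ≤ r)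
    (hG : IntervalIntegrable G volume a b)
    (h : ∀ x ∈ Set.Icc a b, K * (x - a) ^ r ≤ G x * (b - a) ^ r) :
    K * (b - a) / (r + 1) ≤ ∫ x in a..b, G x := by
  rcases hab.eq_or_lt with rfl | hlt
  · simp
  have hba : 0 < b - a := sub_pos.mpr hlt
  have hmono : ∫ x in a..b, K * (x - a) ^ r ≤ ∫ x in a..b, G x * (b - a) ^ r :=
    intervalIntegral.integral_mono_on hab
      ((continuous_const.mul ((continuous_id.sub continuous_const).rpow_const
        fun _ => Or.inr hr)).intervalIntegrable a b) (hG.mul_const _) h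
  have hpow : ∫ x in a..b, (x - a) ^ r = (b - a) ^ r * (b - a) / (r + 1) := by
    rw [intervalIntegral.integral_comp_sub_right (fun u : ℝ => u ^ r), sub_self,
      integral_rpow (Or.inl (by linarith)), Real.zero_rpow (by positivity), Real.rpow_add hba,
      Real.rpow_one, sub_zero]
  rw [intervalIntegral.integral_const_mul, intervalIntegral.integral_mul_const, hpow] at hmono
  refine le_of_mul_le_mul_right ?_ (Real.rpow_pos_of_pos hba r)
  calc K * (b - a) / (r + 1) * (b - a) ^ r = K * ((b - a) ^ r * (b - a) / (r + 1)) := by ring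
    _ ≤ _ := hmono

namespace lorentzPoly

variable {d : ℕ} {A : ℕ → ℝ}

theorem continuous (d : ℕ) (A : ℕ → ℝ) : Continuous (lorentzPoly d A) := by
  unfold lorentzPoly
  fun_prop

theorem nonneg (hA : ∀ j ≤ d, 0 ≤ A j) {x : ℝ} (hx : x ∈ Set.Icc (-1 : ℝ) 1) :
    0 ≤ lorentzPoly d A x :=
  sum_nonneg fun j hj => mul_nonneg
    (mul_nonneg (hA j (Nat.lt_succ_iff.mp (mem_range.mp hj))) (pow_nonneg (by linarith [hx.2]) _))
    (pow_nonneg (by linarith [hx.1]) _)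

theorem neg (d : ℕ) (A : ℕ → ℝ) (x : ℝ) :
    lorentzPoly d A (-x) = lorentzPoly d (fun j => A (d - j)) x := by
  rw [lorentzPoly, lorentzPoly, ← sum_range_reflect]
  refine sum_congr rfl fun j hj => ?_
  have hjd : j ≤ d := Nat.lt_succ_iff.mp (mem_range.mp hj)
  rw [show d + 1 - 1 - j = d - j by omega, Nat.sub_sub_self hjd]
  ring

theorem mul_pow_le (hA : ∀ j ≤ d, 0 ≤ A j) {x y : ℝ} (hx : -1 ≤ x) (hy : y ≤ 1) (hxy : x ≤ y) :
    lorentzPoly d A y * (x + 1) ^ d ≤ lorentzPoly d A x * (y + 1) ^ d := by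
  rw [lorentzPoly, lorentzPoly, sum_mul, sum_mul]
  refine sum_le_sum fun j hj => ?_
  have hjd : j ≤ d := Nat.lt_succ_iff.mp (mem_range.mp hj)
  have hcross : ((1 - y) * (x + 1)) ^ j ≤ ((1 - x) * (y + 1)) ^ j :=
    pow_le_pow_left₀ (by nlinarith) (by nlinarith) j
  have hsplit (z : ℝ) : z ^ d = z ^ j * z ^ (d - j) := by rw [← pow_add, Nat.add_sub_cancel' hjd]
  calc A j * (1 - y) ^ j * (y + 1) ^ (d - j) * (x + 1) ^ d
      = A j * ((1 - y) * (x + 1)) ^ j * ((y + 1) * (x + 1)) ^ (d - j) := by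
        rw [hsplit (x + 1), mul_pow, mul_pow]; ring
    _ ≤ A j * ((1 - x) * (y + 1)) ^ j * ((y + 1) * (x + 1)) ^ (d - j) := by
        have hprod : 0 ≤ (y + 1) * (x + 1) := by nlinarith
        exact mul_le_mul_of_nonneg_right (mul_le_mul_of_nonneg_left hcross (hA j hjd))
          (pow_nonneg hprod _)
    _ = A j * (1 - x) ^ j * (x + 1) ^ (d - j) * (y + 1) ^ d := by
        rw [hsplit (y + 1), mul_pow, mul_pow]; ring

theorem rpow_mul_div_le_integral (hA : ∀ j ≤ d, 0 ≤ A j) {q : ℝ} (hq : 0 ≤ q) {x₀ : ℝ}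
    (hx₀ : x₀ ∈ Set.Icc (-1 : ℝ) 1) :
    lorentzPoly d A x₀ ^ q * (x₀ + 1) / (q * d + 1) ≤
      ∫ x in (-1)..x₀, lorentzPoly d A x ^ q := by
  have h := div_le_integral_of_mul_rpow_le (K := lorentzPoly d A x₀ ^ q) hx₀.1
    (by positivity : 0 ≤ q * d)
    (((continuous d A).rpow_const fun _ => Or.inr hq).intervalIntegrable _ _) ?_
  · simpa only [sub_neg_eq_add] using h
  intro x hx
  have hx1 : x ∈ Set.Icc (-1 : ℝ) 1 := ⟨hx.1, hx.2.trans hx₀.2⟩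
  have hpow (z : ℝ) (hz : 0 ≤ z) : (z ^ d) ^ q = z ^ (q * d) := by
    rw [← Real.rpow_natCast, ← Real.rpow_mul hz, mul_comm]
  have h := Real.rpow_le_rpow
    (mul_nonneg (nonneg hA hx₀) (pow_nonneg (by linarith [hx.1]) _))
    (mul_pow_le hA hx.1 hx₀.2 hx.2) hq
  rwa [Real.mul_rpow (nonneg hA hx₀) (pow_nonneg (by linarith [hx.1]) _),
    Real.mul_rpow (nonneg hA hx1) (pow_nonneg (by linarith [hx₀.1]) _),
    hpow _ (by linarith [hx.1]), hpow _ (by linarith [hx₀.1]), ← sub_neg_eq_add,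
    ← sub_neg_eq_add x₀] at h

theorem rpow_le_integral (hA : ∀ j ≤ d, 0 ≤ A j) {q : ℝ} (hq : 0 ≤ q) {x₀ : ℝ}
    (hx₀ : x₀ ∈ Set.Icc (-1 : ℝ) 1) :
    lorentzPoly d A x₀ ^ q ≤ (q * d + 1) / 2 * ∫ x in (-1)..1, lorentzPoly d A x ^ q := by
  have hleft := rpow_mul_div_le_integral hA hq hx₀
  have hright := rpow_mul_div_le_integral (d := d) (A := fun j => A (d - j))
    (fun j _ => hA _ (Nat.sub_le d j)) hq (x₀ := -x₀) ⟨by linarith [hx₀.2], by linarith [hx₀.1]⟩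
  simp only [← neg d A, neg_neg] at hright
  rw [intervalIntegral.integral_comp_neg (fun x => lorentzPoly d A x ^ q), neg_neg,
    neg_neg] at hright
  have hInt := ((continuous d A).rpow_const fun _ => Or.inr hq).intervalIntegrable (μ := volume)
  rw [← intervalIntegral.integral_add_adjacent_intervals (hInt (-1) x₀) (hInt x₀ 1)]
  have hpos : 0 < q * d + 1 := by positivity
  rw [div_le_iff₀ hpos] at hleft hright
  linarith

end lorentzPoly

theorem nikolskii_lorentz_sup (d : ℕ) (q : ℝ) (hq : 0 < q)
    (f : ℝ → ℝ) (A : ℕ → ℝ) (hA : ∀ j ≤ d, 0 ≤ A j)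
    (hf : ∀ x : ℝ, f x = ∑ j ∈ range (d + 1), A j * (1 - x) ^ j * (x + 1) ^ (d - j)) :
    (⨆ x : Set.Icc (-1 : ℝ) 1, f x) ≤
      ((q * d + 1) / 2) ^ (1 / q) * (∫ x in (-1 : ℝ)..1, f x ^ q) ^ (1 / q) := by
  obtain rfl : f = lorentzPoly d A := funext hf
  have hI : 0 ≤ ∫ x in (-1 : ℝ)..1, lorentzPoly d A x ^ q :=
    intervalIntegral.integral_nonneg (by norm_num) fun x hx =>
      Real.rpow_nonneg (lorentzPoly.nonneg hA hx) q
  have : Nonempty (Set.Icc (-1 : ℝ) 1) := ⟨⟨0, by norm_num⟩⟩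
  refine ciSup_le fun x => ?_
  rw [← Real.mul_rpow (by positivity) hI, one_div,
    Real.le_rpow_inv_iff_of_pos (lorentzPoly.nonneg hA x.2) (by positivity) hq]
  exact lorentzPoly.rpow_le_integral hA hq.le x.2
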